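/- Fix an integer N ≥ 1. The average over the unimodular ensemble of the purity Tr ρ(φ)² equals (2N − 1)/N²; that is, (1/(2π)^{N²}) ∫_{[0,2π]^{N²}} Tr(ρ(φ)²) dφ = (2N − 1)/N². -/

import Mathlib

/-!
Expanding, `Tr ρ² = N⁻⁴ ∑_{j,l,k,m} A_{jk} Ā_{lk} A_{lm} Ā_{jm}`. Each summand is a character
`φ ↦ exp(i ⟨n, φ⟩)` of the torus with integer frequency vector `n = e_{jk} - e_{lk} + e_{lm} - e_{jm}`,
so its average is `1` if `n = 0` and `0` otherwise. The vector `n` vanishes exactly when `j = l` or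
`k = m`, which happens for `2N³ - N²` of the quadruples `(j, l, k, m)`.
-/

open Matrix MeasureTheory Complex Set
open scoped Real

/-- The unimodular matrix with phases `φ`: entries `exp(i φ_{jk})`. -/
noncomputable def uniMat (N : ℕ) (φ : Fin N × Fin N → ℝ) : Matrix (Fin N) (Fin N) ℂ :=
  Matrix.of fun j k => Complex.exp (Complex.I * (φ (j, k) : ℂ))

/-- The random-phase density matrix `ρ(φ) = A(φ) A(φ)ᴴ / N²`. -/
noncomputable def uniRho (N : ℕ) (φ : Fin N × Fin N → ℝ) : Matrix (Fin N) (Fin N) ℂ :=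
  ((N : ℂ) ^ 2)⁻¹ • (uniMat N φ * (uniMat N φ)ᴴ)

theorem integral_Icc_exp_int_mul_I (n : ℤ) :
    ∫ x in Icc (0 : ℝ) (2 * π), exp (n * x * I) = if n = 0 then (2 * π : ℂ) else 0 := by
  rw [integral_Icc_eq_integral_Ioc, ← intervalIntegral.integral_of_le Real.two_pi_pos.le]
  split_ifs with hn
  · simp [hn]
  · have hnI : (n : ℂ) * I ≠ 0 := mul_ne_zero (Int.cast_ne_zero.mpr hn) I_ne_zero
    simp_rw [mul_assoc, mul_comm _ I, ← mul_assoc]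
    rw [integral_exp_mul_complex hnI,
      show (n : ℂ) * I * ↑(2 * π) = n * (2 * π * I) by push_cast; ring, exp_int_mul_two_pi_mul_I]
    simp

theorem integral_univ_pi_Icc_exp_sum_int_mul {ι : Type*} [Fintype ι] (n : ι → ℤ) :
    ∫ x in univ.pi fun _ : ι => Icc (0 : ℝ) (2 * π), exp (↑(∑ i, n i * x i) * I) =
      if n = 0 then (2 * π : ℂ) ^ Fintype.card ι else 0 := by
  simp_rw [ofReal_sum, Finset.sum_mul, exp_sum]
  push_cast
  rw [volume_pi, Measure.restrict_pi_pi,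
    integral_fintype_prod_eq_prod (fun i (y : ℝ) => exp (n i * y * I))]
  simp_rw [integral_Icc_exp_int_mul_I, Fintype.prod_ite_zero, Finset.prod_const, Finset.card_univ,
    funext_iff]
  rfl

theorem Matrix.trace_mul_conjTranspose_sq {ι κ : Type*} [Fintype ι] [DecidableEq ι] [Fintype κ]
    (A : Matrix ι κ ℂ) :
    trace ((A * Aᴴ) ^ 2) =
      ∑ j, ∑ l, ∑ k, ∑ m, A j k * star (A l k) * (A l m * star (A j m)) := by
  simp only [sq, trace, diag, mul_apply, conjTranspose_apply, Finset.sum_mul_sum]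

theorem sum_ite_fst_eq_or_snd_eq {ι κ : Type*} [Fintype ι] [DecidableEq ι] [Fintype κ]
    [DecidableEq κ] (C : ℂ) :
    ∑ j : ι, ∑ l : ι, ∑ k : κ, ∑ m : κ, (if j = l ∨ k = m then C else 0) =
      (Fintype.card ι * Fintype.card κ ^ 2 + Fintype.card ι ^ 2 * Fintype.card κ -
        Fintype.card ι * Fintype.card κ) * C := by
  have inclusion_exclusion (j l : ι) (k m : κ) :
      (if j = l ∨ k = m then C else 0) =
        (if j = l then C else 0) + (if k = m then C else 0) -
          (if j = l then (if k = m then C else 0) else 0) := by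
    by_cases j = l <;> by_cases k = m <;> simp [*]
  simp only [inclusion_exclusion, Finset.sum_add_distrib, Finset.sum_sub_distrib,
    Finset.sum_ite_irrel, Finset.sum_ite_eq, Finset.mem_univ, if_true, Finset.sum_const_zero,
    Finset.sum_const, Finset.card_univ, nsmul_eq_mul]
  ring

section RectCoeff

variable {ι κ : Type*} [DecidableEq ι] [DecidableEq κ]

def rectCoeff (j l : ι) (k m : κ) : ι × κ → ℤ :=
  Pi.single (j, k) 1 - Pi.single (l, k) 1 + Pi.single (l, m) 1 - Pi.single (j, m) 1

theorem rectCoeff_eq_zero_iff {j l : ι} {k m : κ} : rectCoeff j l k m = 0 ↔ j = l ∨ k = m := by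
  constructor
  · intro h
    by_contra! hne
    have := congrFun h (j, k)
    simp [rectCoeff, hne.1, hne.2] at this
  · rintro (rfl | rfl) <;> simp [rectCoeff]

theorem sum_rectCoeff_mul [Fintype ι] [Fintype κ] (j l : ι) (k m : κ) (φ : ι × κ → ℝ) :
    ∑ p, rectCoeff j l k m p * φ p = φ (j, k) - φ (l, k) + φ (l, m) - φ (j, m) := by
  simp [rectCoeff, sub_mul, add_mul, Finset.sum_add_distrib, Finset.sum_sub_distrib,
    Pi.single_apply]

end RectCoeff

theorem uniMat_mul_star (N : ℕ) (φ : Fin N × Fin N → ℝ) (j l k m : Fin N) :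
    uniMat N φ j k * star (uniMat N φ l k) * (uniMat N φ l m * star (uniMat N φ j m)) =
      exp (↑(∑ p, rectCoeff j l k m p * φ p) * I) := by
  simp only [uniMat, of_apply, star_def, ← exp_conj, map_mul, conj_I, conj_ofReal, ← exp_add,
    sum_rectCoeff_mul]
  congr 1
  push_cast
  ring

theorem avg_purity_unimodular (N : ℕ) (hN : 1 ≤ N) :
    ((2 * Real.pi : ℂ) ^ (N ^ 2))⁻¹ *
        ∫ φ in Set.univ.pi fun _ : Fin N × Fin N => Set.Icc (0 : ℝ) (2 * Real.pi),
          Matrix.trace (uniRho N φ ^ 2) =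
      (2 * N - 1) / (N : ℂ) ^ 2 := by
  have integral_monomial (j l k m : Fin N) :
      ∫ φ in univ.pi fun _ : Fin N × Fin N => Icc (0 : ℝ) (2 * π),
        exp (↑(∑ p, rectCoeff j l k m p * φ p) * I) =
      if j = l ∨ k = m then (2 * π : ℂ) ^ (N ^ 2) else 0 := by
    simp only [integral_univ_pi_Icc_exp_sum_int_mul, rectCoeff_eq_zero_iff, Fintype.card_prod,
      Fintype.card_fin, sq]
  -- one sum over quadruples, so that a single `integral_finsetSum` exchanges sum and integral
  simp only [uniRho, smul_pow, trace_smul, trace_mul_conjTranspose_sq, smul_eq_mul,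
    uniMat_mul_star, ← Fintype.sum_prod_type']
  rw [integral_const_mul, integral_finsetSum _ fun q _ =>
    (Continuous.continuousOn (by fun_prop)).integrableOn_compact
      (isCompact_univ_pi fun _ => isCompact_Icc)]
  simp only [integral_monomial]
  simp only [Fintype.sum_prod_type, sum_ite_fst_eq_or_snd_eq, Fintype.card_fin]
  have hN0 : (N : ℂ) ≠ 0 := Nat.cast_ne_zero.mpr (by omega)
  have hπ : (2 * π : ℂ) ≠ 0 := by simp [Real.pi_ne_zero]
  field_simp
  ring
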